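/- Let G be a finite simple graph with at least one vertex. If G is connected, then c(G) > 0. -/

import Mathlib

/-!
A `k`-partition is the family of colour classes of a surjective proper colouring with `k`
colours, so grouping the proper colourings with `n` colours by their image gives the chromatic
polynomial `P_G(n) = ∑ₖ c_k(G) · n(n-1)⋯(n-k+1) / k!`. The falling factorial of length `k` has
linear coefficient `(-1)^(k-1) (k-1)!`, hence `c(G) = (-1)^(l+1) [x] P_G`.

Deletion–contraction `P_{G-ab} = P_G + P_{G/ab}` then gives `c(G) = c(G - ab) + c(G / ab)`, the
sign flipping because `G / ab` has one vertex fewer. If `G` is disconnected, `P_G` is the product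
of the polynomials of two nonempty vertex sets with no edges between them, both vanishing at `0`,
so `x² ∣ P_G` and `c(G) = 0`. Inducting on the number of vertices and then on the graph,
`c(G / ab) > 0` and `c(G - ab) ≥ 0` for a connected `G` with an edge `ab`, while a single vertex
has `c = 1`.
-/

/-- An (ordered) `k`-partition of a finite simple graph `G`: an ordered `k`-tuple of nonempty,
pairwise disjoint independent sets of `G` whose union is the whole vertex set. -/
def SimpleGraph.IsOrderedPartition {V : Type*} [Fintype V] [DecidableEq V]
    (G : SimpleGraph V) {k : ℕ} (J : Fin k → Finset V) : Prop :=
  (∀ i, (J i).Nonempty) ∧ (∀ i j, i ≠ j → Disjoint (J i) (J j)) ∧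
    (Finset.univ.biUnion J = Finset.univ) ∧
    (∀ i, ∀ a ∈ J i, ∀ b ∈ J i, ¬ G.Adj a b)

/-- `c_k(G)`: the number of (ordered) `k`-partitions of `G`, with `c_0(G) := 0`. -/
noncomputable def SimpleGraph.ckPart {V : Type*} [Fintype V] [DecidableEq V]
    (G : SimpleGraph V) (k : ℕ) : ℕ :=
  if k = 0 then 0 else Nat.card {J : Fin k → Finset V // G.IsOrderedPartition J}

/-- `c(G) := (-1)^l * ∑_{k=1}^{l} (-1)^k c_k(G)/k`, where `l` is the number of vertices. -/
noncomputable def SimpleGraph.cInv {V : Type*} [Fintype V] [DecidableEq V]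
    (G : SimpleGraph V) : ℚ :=
  (-1 : ℚ) ^ (Fintype.card V) *
    ∑ k ∈ Finset.Icc 1 (Fintype.card V), (-1 : ℚ) ^ k * (G.ckPart k : ℚ) / k

open Finset Polynomial Function Nat

theorem Polynomial.eq_of_eval_natCast_eq {R : Type*} [CommRing R] [IsDomain R] [CharZero R]
    {P Q : R[X]} (h : ∀ n : ℕ, P.eval (n : R) = Q.eval (n : R)) : P = Q :=
  eq_of_infinite_eval_eq P Q <| (Set.infinite_range_of_injective Nat.cast_injective).mono
    (Set.range_subset_iff.mpr h)

theorem descPochhammer_succ_coeff_one (R : Type*) [CommRing R] (n : ℕ) :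
    (descPochhammer R (n + 1)).coeff 1 = (-1) ^ n * n ! := by
  have h := ascPochhammer_eval_neg_eq_descPochhammer R (-1 : R) n
  rw [neg_neg, ascPochhammer_eval_one] at h
  rw [descPochhammer_succ_left, coeff_X_mul, coeff_zero_eq_eval_zero, eval_comp, eval_sub, eval_X,
    eval_one, zero_sub, h, ← mul_assoc, ← pow_add, ← two_mul, pow_mul, neg_one_sq, one_pow,
    one_mul]

theorem Fintype.card_subtype_ne {V : Type*} [Fintype V] [DecidableEq V] (b : V) :
    Fintype.card {x : V // x ≠ b} = Fintype.card V - 1 := by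
  simp [Fintype.card_subtype_compl]

namespace SimpleGraph

variable {V W α : Type*} {G : SimpleGraph V}

theorem Reachable.map_fun (f : V → W) {u v : V} (h : G.Reachable u v) :
    (G.map f).Reachable (f u) (f v) := by
  obtain ⟨p⟩ := h
  induction p with
  | nil => rfl
  | @cons x y _ hxy _ ih =>
    refine Reachable.trans ?_ ih
    by_cases hf : f x = f y
    · rw [hf]
    · exact (map_adj_apply' hxy hf).reachable

theorem Connected.map_fun {f : V → W} (hf : Surjective f) (hG : G.Connected) :
    (G.map f).Connected := by
  have := hG.nonempty.map f
  refine ⟨fun x y => ?_⟩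
  obtain ⟨u, rfl⟩ := hf x
  obtain ⟨v, rfl⟩ := hf y
  exact (hG.preconnected u v).map_fun f

theorem Adj.deleteEdges_lt {a b : V} (hadj : G.Adj a b) : G.deleteEdges {s(a, b)} < G :=
  lt_of_le_not_ge (deleteEdges_le _) fun hle => (deleteEdges_adj.mp (hle hadj)).2 rfl

section Contraction

variable [DecidableEq V] {a b : V}

def mergeInto (hab : a ≠ b) (x : V) : {x : V // x ≠ b} :=
  if h : x = b then ⟨a, hab⟩ else ⟨x, h⟩

variable (hab : a ≠ b)

@[simp] theorem mergeInto_coe (x : {x : V // x ≠ b}) : mergeInto hab x = x := dif_neg x.2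

theorem mergeInto_surjective : Surjective (mergeInto hab) :=
  fun x => ⟨x, mergeInto_coe hab x⟩

@[simp] theorem mergeInto_left : mergeInto hab a = ⟨a, hab⟩ := dif_neg hab

@[simp] theorem mergeInto_right : mergeInto hab b = ⟨a, hab⟩ := dif_pos rfl

theorem apply_mergeInto {f : V → α} (hf : f a = f b) (x : V) : f (mergeInto hab x) = f x := by
  unfold mergeInto
  split_ifs with h
  · rw [hf, h]
  · rfl

theorem mergeInto_ne_mergeInto {x y : V} (hxy : x ≠ y) (he : s(x, y) ≠ s(a, b)) :
    mergeInto hab x ≠ mergeInto hab y := by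
  unfold mergeInto
  split_ifs <;> grind [Sym2.eq_swap]

abbrev contractEdge (G : SimpleGraph V) : SimpleGraph {x : V // x ≠ b} := G.map (mergeInto hab)

theorem Connected.contractEdge (hG : G.Connected) : (G.contractEdge hab).Connected :=
  hG.map_fun (mergeInto_surjective hab)

end Contraction

section Colorings

variable {a b : V}

def deleteEdgesColoringEquiv (hadj : G.Adj a b) :
    {C : (G.deleteEdges {s(a, b)}).Coloring α // C a ≠ C b} ≃ G.Coloring α where
  toFun C := Coloring.mk C.1 fun {x y} hxy => by
    by_cases he : s(x, y) = s(a, b)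
    · rcases Sym2.eq_iff.mp he with ⟨rfl, rfl⟩ | ⟨rfl, rfl⟩
      · exact C.2
      · exact C.2.symm
    · exact C.1.valid (by simp [hxy, he])
  invFun C := ⟨C.comp (Hom.ofLE (deleteEdges_le _)), C.valid hadj⟩
  left_inv _ := rfl
  right_inv _ := rfl

def coloringEquivProdInduce (A : Set V) [DecidablePred (· ∈ A)]
    (hA : ∀ ⦃x y⦄, G.Adj x y → x ∈ A → y ∈ A) :
    G.Coloring α ≃ (G.induce A).Coloring α × (G.induce Aᶜ).Coloring α where
  toFun C := (C.comp (Embedding.induce A).toHom, C.comp (Embedding.induce Aᶜ).toHom)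
  invFun C := Coloring.mk (fun v => if h : v ∈ A then C.1 ⟨v, h⟩ else C.2 ⟨v, h⟩)
    fun {x y} hxy => by
      by_cases hx : x ∈ A
      · have hy := hA hxy hx
        simp only [dif_pos hx, dif_pos hy]
        exact C.1.valid hxy
      · have hy : y ∉ A := fun hy => hx (hA hxy.symm hy)
        simp only [dif_neg hx, dif_neg hy]
        exact C.2.valid hxy
  left_inv C := RelHom.ext fun v => by by_cases v ∈ A <;> simp [Coloring.mk]
  right_inv C := Prod.ext (RelHom.ext fun v => dif_pos v.2) (RelHom.ext fun v => dif_neg v.2)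

variable [DecidableEq V]

def contractEdgeColoringEquiv (hab : a ≠ b) :
    {C : (G.deleteEdges {s(a, b)}).Coloring α // C a = C b} ≃
      (G.contractEdge hab).Coloring α where
  toFun C := Coloring.mk (fun x => C.1 x) fun {_ _} ⟨hne, u, v, huv, hu, hv⟩ => by
    subst hu hv
    rw [apply_mergeInto hab C.2, apply_mergeInto hab C.2]
    refine C.1.valid (deleteEdges_adj.mpr ⟨huv, fun he => hne ?_⟩)
    rcases Sym2.eq_iff.mp he with ⟨rfl, rfl⟩ | ⟨rfl, rfl⟩ <;> simp
  invFun C := ⟨Coloring.mk (fun v => C (mergeInto hab v)) fun {x y} hxy => by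
      obtain ⟨hxy, he⟩ := deleteEdges_adj.mp hxy
      exact C.valid ⟨mergeInto_ne_mergeInto hab hxy.ne he, x, y, hxy, rfl, rfl⟩,
    by simp [Coloring.mk]⟩
  left_inv C := Subtype.ext (RelHom.ext (apply_mergeInto hab C.2))
  right_inv C := RelHom.ext fun x => congrArg C (mergeInto_coe hab x)

end Colorings

section OrderedPartition

variable [Fintype V] [DecidableEq V] {k : ℕ} {J : Fin k → Finset V}

theorem IsOrderedPartition.existsUnique_mem (hJ : G.IsOrderedPartition J) (v : V) :
    ∃! i, v ∈ J i := by
  obtain ⟨i, -, hi⟩ := mem_biUnion.mp (hJ.2.2.1 ▸ mem_univ v)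
  exact ⟨i, hi, fun j hj => by_contra fun hji => Finset.disjoint_left.mp (hJ.2.1 j i hji) hj hi⟩

noncomputable def IsOrderedPartition.index (hJ : G.IsOrderedPartition J) (v : V) : Fin k :=
  (hJ.existsUnique_mem v).exists.choose

theorem IsOrderedPartition.index_eq_iff (hJ : G.IsOrderedPartition J) {v : V} {i : Fin k} :
    hJ.index v = i ↔ v ∈ J i :=
  ⟨fun h => h ▸ (hJ.existsUnique_mem v).exists.choose_spec,
    fun h => (hJ.existsUnique_mem v).unique (hJ.existsUnique_mem v).exists.choose_spec h⟩

theorem isOrderedPartition_colorClasses {C : G.Coloring (Fin k)} (hC : Surjective C) :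
    G.IsOrderedPartition fun i => {v | C v = i} := by
  refine ⟨fun i => ?_, fun i j hij => ?_, ?_, fun i x hx y hy hxy => ?_⟩
  · obtain ⟨v, hv⟩ := hC i
    exact ⟨v, by simpa using hv⟩
  · exact Finset.disjoint_left.mpr fun v hi hj =>
      hij ((mem_filter.mp hi).2.symm.trans (mem_filter.mp hj).2)
  · exact eq_univ_of_forall fun v => mem_biUnion.mpr ⟨C v, mem_univ _, by simp⟩
  · exact C.valid hxy ((mem_filter.mp hx).2.trans (mem_filter.mp hy).2.symm)

noncomputable def surjectiveColoringEquivOrderedPartition (k : ℕ) :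
    {C : G.Coloring (Fin k) // Surjective C} ≃
      {J : Fin k → Finset V // G.IsOrderedPartition J} where
  toFun C := ⟨_, isOrderedPartition_colorClasses C.2⟩
  invFun J := ⟨Coloring.mk J.2.index fun {x y} hxy hi =>
      J.2.2.2.2 _ x (J.2.index_eq_iff.mp rfl) y (J.2.index_eq_iff.mp hi.symm) hxy,
    fun i => (J.2.1 i).imp fun _ => J.2.index_eq_iff.mpr⟩
  left_inv C := Subtype.ext <| RelHom.ext fun v => by
    simp [Coloring.mk, IsOrderedPartition.index_eq_iff]
  right_inv J := Subtype.ext <| funext fun i => by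
    ext v
    simp [Coloring.mk, IsOrderedPartition.index_eq_iff]

end OrderedPartition

noncomputable def surjColoringCard (G : SimpleGraph V) (k : ℕ) : ℕ :=
  Nat.card {C : G.Coloring (Fin k) // Surjective C}

theorem ckPart_eq_surjColoringCard [Fintype V] [DecidableEq V] {k : ℕ} (hk : k ≠ 0) :
    G.ckPart k = G.surjColoringCard k := by
  rw [ckPart, if_neg hk, surjColoringCard,
    Nat.card_congr (surjectiveColoringEquivOrderedPartition k)]

theorem card_surjective_coloring [Fintype α] :
    Nat.card {C : G.Coloring α // Surjective C} = G.surjColoringCard (Fintype.card α) := by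
  refine Nat.card_congr ((recolorOfEquiv G (Fintype.equivFin α)).subtypeEquiv fun C => ?_)
  exact (Fintype.equivFin α).comp_surjective C |>.symm

theorem card_coloring_of_unique [Unique V] : Nat.card (G.Coloring α) = Nat.card α :=
  Nat.card_congr
    { toFun C := C default
      invFun c := Coloring.mk (fun _ => c) fun h => absurd (Subsingleton.elim _ _) h.ne
      left_inv C := RelHom.ext fun v => by simp [Coloring.mk, Unique.eq_default v]
      right_inv _ := rfl }

section Counting

variable [Fintype V]

theorem surjColoringCard_eq_zero_of_card_lt {k : ℕ} (hk : Fintype.card V < k) :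
    G.surjColoringCard k = 0 := by
  rw [surjColoringCard, Nat.card_eq_zero]
  exact Or.inl ⟨fun C => by simpa using (Fintype.card_le_of_surjective _ C.2).trans_lt hk⟩

def coloringImageEquiv [DecidableEq α] (S : Finset α) :
    {C : G.Coloring α // univ.image C = S} ≃ {C : G.Coloring S // Surjective C} where
  toFun C := ⟨Coloring.mk (fun v => ⟨C.1 v, C.2.subset (mem_image_of_mem _ (mem_univ v))⟩)
      fun hxy h => C.1.valid hxy (congrArg Subtype.val h),
    fun s => by
      obtain ⟨v, -, hv⟩ := mem_image.mp (C.2.superset s.2)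
      exact ⟨v, Subtype.ext hv⟩⟩
  invFun C := ⟨(Embedding.completeGraph (Embedding.subtype (· ∈ S))).toHom.comp C.1, by
    ext s
    refine ⟨fun hs => ?_, fun hs => ?_⟩
    · obtain ⟨v, -, rfl⟩ := mem_image.mp hs
      exact (C.1 v).2
    · obtain ⟨v, hv⟩ := C.2 ⟨s, hs⟩
      exact mem_image.mpr ⟨v, mem_univ v, by simp [hv]⟩⟩
  left_inv _ := rfl
  right_inv _ := rfl

theorem card_coloring_eq_sum [Fintype α] [DecidableEq α] :
    Nat.card (G.Coloring α) = ∑ S : Finset α, G.surjColoringCard #S := by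
  rw [← Nat.card_congr (Equiv.sigmaFiberEquiv fun C : G.Coloring α => univ.image C),
    Nat.card_sigma]
  refine sum_congr rfl fun S _ => ?_
  rw [Nat.card_congr (coloringImageEquiv S), card_surjective_coloring, Fintype.card_coe]

theorem card_coloring_fin (n : ℕ) :
    Nat.card (G.Coloring (Fin n)) =
      ∑ k ∈ range (Fintype.card V + 1), n.choose k * G.surjColoringCard k := by
  have hsub {l m : ℕ} : range (l + 1) ⊆ range (l + m + 1) := range_subset_range.mpr (by omega)
  have hn : ∑ k ∈ range (n + 1), n.choose k * G.surjColoringCard k =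
      ∑ k ∈ range (n + Fintype.card V + 1), n.choose k * G.surjColoringCard k :=
    sum_subset hsub fun k _ hk => by
      rw [Nat.choose_eq_zero_of_lt (by simpa using hk), zero_mul]
  have hV : ∑ k ∈ range (Fintype.card V + 1), n.choose k * G.surjColoringCard k =
      ∑ k ∈ range (Fintype.card V + n + 1), n.choose k * G.surjColoringCard k :=
    sum_subset hsub fun k _ hk => by
      rw [surjColoringCard_eq_zero_of_card_lt (by simpa using hk), mul_zero]
  rw [card_coloring_eq_sum, ← powerset_univ, sum_powerset_apply_card, Finset.card_univ,
    Fintype.card_fin]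
  simp only [smul_eq_mul]
  rw [hn, hV, add_comm n]

end Counting

section ChromaticPolynomial

variable [Fintype V]

noncomputable def chromaticPolynomial (G : SimpleGraph V) : ℚ[X] :=
  ∑ k ∈ range (Fintype.card V + 1),
    ((G.surjColoringCard k : ℚ) / k !) • descPochhammer ℚ k

theorem eval_chromaticPolynomial (n : ℕ) :
    G.chromaticPolynomial.eval (n : ℚ) = Nat.card (G.Coloring (Fin n)) := by
  rw [card_coloring_fin, chromaticPolynomial, eval_finsetSum, Nat.cast_sum]
  refine sum_congr rfl fun k _ => ?_
  rw [eval_smul, smul_eq_mul, descPochhammer_eval_eq_descFactorial,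
    Nat.descFactorial_eq_factorial_mul_choose]
  push_cast
  field_simp

theorem chromaticPolynomial_coeff_zero [Nonempty V] : G.chromaticPolynomial.coeff 0 = 0 := by
  have : IsEmpty (G.Coloring (Fin 0)) := ⟨fun C => (C (Classical.arbitrary V)).elim0⟩
  simpa [coeff_zero_eq_eval_zero] using G.eval_chromaticPolynomial 0

theorem chromaticPolynomial_of_unique [Unique V] : G.chromaticPolynomial = X :=
  Polynomial.eq_of_eval_natCast_eq fun n => by
    rw [eval_chromaticPolynomial, card_coloring_of_unique, Nat.card_eq_fintype_card,
      Fintype.card_fin, eval_X]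

theorem chromaticPolynomial_deleteEdges_eq_add [DecidableEq V] {a b : V} (hadj : G.Adj a b) :
    (G.deleteEdges {s(a, b)}).chromaticPolynomial =
      G.chromaticPolynomial + (G.contractEdge hadj.ne).chromaticPolynomial := by
  refine Polynomial.eq_of_eval_natCast_eq fun n => ?_
  rw [eval_add, eval_chromaticPolynomial, eval_chromaticPolynomial, eval_chromaticPolynomial,
    ← Nat.card_congr (Equiv.sumCompl fun C : (G.deleteEdges {s(a, b)}).Coloring (Fin n) =>
      C a = C b), Nat.card_sum, Nat.card_congr (deleteEdgesColoringEquiv hadj),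
    Nat.card_congr (contractEdgeColoringEquiv hadj.ne)]
  push_cast
  ring

theorem chromaticPolynomial_eq_induce_mul_induce_compl (A : Set V) [DecidablePred (· ∈ A)]
    (hA : ∀ ⦃x y⦄, G.Adj x y → x ∈ A → y ∈ A) :
    G.chromaticPolynomial =
      (G.induce A).chromaticPolynomial * (G.induce Aᶜ).chromaticPolynomial :=
  Polynomial.eq_of_eval_natCast_eq fun n => by
    rw [eval_mul, eval_chromaticPolynomial, eval_chromaticPolynomial, eval_chromaticPolynomial,
      Nat.card_congr (coloringEquivProdInduce A hA), Nat.card_prod, Nat.cast_mul]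

theorem cInv_eq_coeff_one [DecidableEq V] :
    G.cInv = (-1) ^ (Fintype.card V + 1) * G.chromaticPolynomial.coeff 1 := by
  rw [cInv, chromaticPolynomial, finsetSum_coeff, sum_range_succ', ← Ico_add_one_right_eq_Icc,
    sum_Ico_eq_sum_range, Nat.add_sub_cancel, descPochhammer_zero, coeff_smul, coeff_one,
    if_neg one_ne_zero, smul_zero, add_zero, mul_sum, mul_sum]
  refine sum_congr rfl fun k _ => ?_
  rw [coeff_smul, smul_eq_mul, descPochhammer_succ_coeff_one, add_comm 1 k,
    ckPart_eq_surjColoringCard k.succ_ne_zero, factorial_succ]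
  push_cast
  field_simp
  ring

theorem cInv_of_unique [DecidableEq V] [Unique V] : G.cInv = 1 := by
  simp [cInv_eq_coeff_one, chromaticPolynomial_of_unique]

theorem cInv_eq_deleteEdges_add_contractEdge [DecidableEq V] {a b : V} (hadj : G.Adj a b) :
    G.cInv = (G.deleteEdges {s(a, b)}).cInv + (G.contractEdge hadj.ne).cInv := by
  obtain ⟨l, hl⟩ := Nat.exists_eq_add_one.mpr (Fintype.card_pos_iff.mpr ⟨a⟩)
  rw [cInv_eq_coeff_one, cInv_eq_coeff_one, cInv_eq_coeff_one,
    chromaticPolynomial_deleteEdges_eq_add hadj,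
    coeff_add, Fintype.card_subtype_ne, hl, Nat.add_sub_cancel, pow_succ]
  ring

theorem cInv_eq_zero_of_not_connected [DecidableEq V] (h : ¬G.Connected) : G.cInv = 0 := by
  cases isEmpty_or_nonempty V
  · simp [cInv]
  obtain ⟨v, w, hvw⟩ : ∃ v w, ¬G.Reachable v w := by
    by_contra! hG
    exact h ⟨hG⟩
  classical
  let A : Set V := {x | G.Reachable v x}
  have : Nonempty A := ⟨⟨v, Reachable.refl v⟩⟩
  have : Nonempty ↥Aᶜ := ⟨⟨w, hvw⟩⟩
  obtain ⟨p, hp⟩ := X_dvd_iff.mpr (G.induce A).chromaticPolynomial_coeff_zero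
  obtain ⟨q, hq⟩ := X_dvd_iff.mpr (G.induce Aᶜ).chromaticPolynomial_coeff_zero
  have hA : ∀ ⦃x y⦄, G.Adj x y → x ∈ A → y ∈ A := fun _ _ hxy hx => hx.trans hxy.reachable
  rw [cInv_eq_coeff_one, chromaticPolynomial_eq_induce_mul_induce_compl A hA,
    hp, hq, show X * p * (X * q) = X ^ 2 * (p * q) by ring, coeff_X_pow_mul', if_neg (by omega),
    mul_zero]

end ChromaticPolynomial

end SimpleGraph

open SimpleGraph

theorem cInv_pos_of_connected_general {V : Type*} [Fintype V] [DecidableEq V]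
    (G : SimpleGraph V) (hG : G.Connected) :
    0 < G.cInv := by
  induction hn : Fintype.card V using Nat.strong_induction_on generalizing V with
  | _ n ihn =>
  induction G using WellFoundedLT.induction with
  | _ G ihG =>
  have := hG.nonempty
  obtain rfl | ⟨a, b, hadj⟩ := eq_or_ne G ⊥ |>.imp_right ne_bot_iff_exists_adj.mp
  · have : Subsingleton V := ⟨fun u v => reachable_bot.mp (hG u v)⟩
    have : Unique V := _root_.uniqueOfSubsingleton (Classical.arbitrary V)
    simp [cInv_of_unique]
  have hdel : 0 ≤ (G.deleteEdges {s(a, b)}).cInv := by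
    by_cases hc : (G.deleteEdges {s(a, b)}).Connected
    · exact (ihG _ hadj.deleteEdges_lt hc).le
    · rw [cInv_eq_zero_of_not_connected hc]
  have hcon : 0 < (G.contractEdge hadj.ne).cInv :=
    ihn (n - 1) (hn ▸ Nat.sub_lt Fintype.card_pos one_pos) _ (hG.contractEdge hadj.ne)
      (by rw [Fintype.card_subtype_ne, hn])
  rw [cInv_eq_deleteEdges_add_contractEdge hadj]
  linarith

/-- **Connected graphs.** If `G` is a connected graph (on at least one vertex),
then `c(G) > 0`. -/
theorem cInv_pos_of_connected {V : Type*} [Fintype V] [DecidableEq V] [Nonempty V]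
    (G : SimpleGraph V) (hG : G.Connected) :
    0 < G.cInv :=
  cInv_pos_of_connected_general G hG
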